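/- Let H₀, H₁, K₀, K₁ be complex Hilbert spaces, X ∈ B(H₁,H₀), U₀₁ ∈ B(H₁,K₀), U₁₀ ∈ B(H₀,K₁), and suppose the block operator U := [[U₀₁∘X*, U₀₁],[U₁₀, −U₁₀∘X]] : H₀⊕H₁ → K₀⊕K₁ is unitary. Then: U₀₁(1+X*X)U₀₁* = 1 on K₀; U₁₀(1+XX*)U₁₀* = 1 on K₁; X∘U₀₁*∘U₀₁ = U₁₀*∘U₁₀∘X; X∘U₀₁*∘U₀₁∘X* + U₁₀*∘U₁₀ = 1 on H₀; X*∘U₁₀*∘U₁₀∘X + U₀₁*∘U₀₁ = 1 on H₁; consequently U₀₁*∘U₀₁ = (1+X*X)⁻¹, U₁₀*∘U₁₀ = (1+XX*)⁻¹, and U₀₁ and U₁₀ are invertible. -/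

import Mathlib

open ContinuousLinearMap

noncomputable def blockOp {H₀ H₁ K₀ K₁ : Type*}
    [NormedAddCommGroup H₀] [InnerProductSpace ℂ H₀]
    [NormedAddCommGroup H₁] [InnerProductSpace ℂ H₁]
    [NormedAddCommGroup K₀] [InnerProductSpace ℂ K₀]
    [NormedAddCommGroup K₁] [InnerProductSpace ℂ K₁]
    (A : H₀ →L[ℂ] K₀) (B : H₁ →L[ℂ] K₀) (C : H₀ →L[ℂ] K₁) (D : H₁ →L[ℂ] K₁) :
    WithLp 2 (H₀ × H₁) →L[ℂ] WithLp 2 (K₀ × K₁) :=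
  (((WithLp.prodContinuousLinearEquiv 2 ℂ K₀ K₁).symm : (K₀ × K₁) →L[ℂ] WithLp 2 (K₀ × K₁)) ∘L
    ((A.coprod B).prod (C.coprod D))) ∘L
    ((WithLp.prodContinuousLinearEquiv 2 ℂ H₀ H₁ : WithLp 2 (H₀ × H₁) →L[ℂ] (H₀ × H₁)))

/-!
Multiplying out `U† U = 1` and `U U† = 1` blockwise gives the first five identities; the
off-diagonal entries of `U U†` vanish identically. The off-diagonal entries of `U† U` say that
`X` intertwines `P = U₀₁† U₀₁` with `Q = U₁₀† U₁₀`, which turns the diagonal entry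
`X† Q X + P = 1` into `P (1 + X† X) = (1 + X† X) P = 1`, and symmetrically for `Q`.
-/

section Block

variable {G₀ G₁ H₀ H₁ K₀ K₁ : Type*}
    [NormedAddCommGroup G₀] [InnerProductSpace ℂ G₀]
    [NormedAddCommGroup G₁] [InnerProductSpace ℂ G₁]
    [NormedAddCommGroup H₀] [InnerProductSpace ℂ H₀]
    [NormedAddCommGroup H₁] [InnerProductSpace ℂ H₁]
    [NormedAddCommGroup K₀] [InnerProductSpace ℂ K₀]
    [NormedAddCommGroup K₁] [InnerProductSpace ℂ K₁]

@[simp] lemma blockOp_fst (A : H₀ →L[ℂ] K₀) (B : H₁ →L[ℂ] K₀) (C : H₀ →L[ℂ] K₁)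
    (D : H₁ →L[ℂ] K₁) (x : WithLp 2 (H₀ × H₁)) : (blockOp A B C D x).fst = A x.fst + B x.snd :=
  rfl

@[simp] lemma blockOp_snd (A : H₀ →L[ℂ] K₀) (B : H₁ →L[ℂ] K₀) (C : H₀ →L[ℂ] K₁)
    (D : H₁ →L[ℂ] K₁) (x : WithLp 2 (H₀ × H₁)) : (blockOp A B C D x).snd = C x.fst + D x.snd :=
  rfl

lemma blockOp_comp (A : H₀ →L[ℂ] K₀) (B : H₁ →L[ℂ] K₀) (C : H₀ →L[ℂ] K₁) (D : H₁ →L[ℂ] K₁)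
    (A' : G₀ →L[ℂ] H₀) (B' : G₁ →L[ℂ] H₀) (C' : G₀ →L[ℂ] H₁) (D' : G₁ →L[ℂ] H₁) :
    blockOp A B C D ∘L blockOp A' B' C' D' =
      blockOp (A ∘L A' + B ∘L C') (A ∘L B' + B ∘L D') (C ∘L A' + D ∘L C') (C ∘L B' + D ∘L D') := by
  ext x : 1
  refine (WithLp.ext_iff _).2 (Prod.ext ?_ ?_) <;>
    simp only [WithLp.ofLp_fst, WithLp.ofLp_snd, comp_apply, blockOp_fst, blockOp_snd, add_apply,
      map_add] <;> abel

lemma blockOp_eq_id_iff (A : H₀ →L[ℂ] H₀) (B : H₁ →L[ℂ] H₀) (C : H₀ →L[ℂ] H₁)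
    (D : H₁ →L[ℂ] H₁) :
    blockOp A B C D = ContinuousLinearMap.id ℂ _ ↔ A = 1 ∧ B = 0 ∧ C = 0 ∧ D = 1 := by
  refine ⟨fun h => ?_, ?_⟩
  · have h₀ (x : H₀) := congr($h (WithLp.toLp 2 (x, 0)))
    have h₁ (y : H₁) := congr($h (WithLp.toLp 2 (0, y)))
    refine ⟨ext fun x => ?_, ext fun y => ?_, ext fun x => ?_, ext fun y => ?_⟩
    · simpa using congr(WithLp.fst $(h₀ x))
    · simpa using congr(WithLp.fst $(h₁ y))
    · simpa using congr(WithLp.snd $(h₀ x))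
    · simpa using congr(WithLp.snd $(h₁ y))
  · rintro ⟨rfl, rfl, rfl, rfl⟩
    ext x : 1
    refine (WithLp.ext_iff _).2 (Prod.ext ?_ ?_) <;> simp

lemma blockOp_adjoint [CompleteSpace H₀] [CompleteSpace H₁] [CompleteSpace K₀] [CompleteSpace K₁]
    (A : H₀ →L[ℂ] K₀) (B : H₁ →L[ℂ] K₀) (C : H₀ →L[ℂ] K₁) (D : H₁ →L[ℂ] K₁) :
    adjoint (blockOp A B C D) = blockOp (adjoint A) (adjoint C) (adjoint B) (adjoint D) := by
  refine (eq_adjoint_iff _ _ |>.2 fun x y => ?_).symm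
  simp only [WithLp.prod_inner_apply, WithLp.ofLp_fst, WithLp.ofLp_snd, blockOp_fst, blockOp_snd,
    inner_add_left, inner_add_right, adjoint_inner_left]
  ring

end Block

section Intertwining

variable {R M N : Type*} [Semiring R] [TopologicalSpace M] [AddCommMonoid M] [Module R M]
    [ContinuousAdd M] [TopologicalSpace N] [AddCommMonoid N] [Module R N]
    {P : M →L[R] M} {Q : N →L[R] N} {X : M →L[R] N} {Y : N →L[R] M}

lemma comp_one_add_comp_eq_one (hPY : P ∘L Y = Y ∘L Q) (h : Y ∘L Q ∘L X + P = 1) :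
    P ∘L (1 + Y ∘L X) = 1 := by
  rw [comp_add, ← comp_assoc, hPY, comp_assoc, add_comm]
  exact h

lemma one_add_comp_comp_eq_one (hXP : X ∘L P = Q ∘L X) (h : Y ∘L Q ∘L X + P = 1) :
    (1 + Y ∘L X) ∘L P = 1 := by
  rw [add_comp, comp_assoc, hXP, add_comm]
  exact h

end Intertwining

/-- consequences of `U = [[U₀₁X*, U₀₁],[U₁₀, -U₁₀X]]` being unitary. -/
theorem stmt7 {H₀ H₁ K₀ K₁ : Type*}
    [NormedAddCommGroup H₀] [InnerProductSpace ℂ H₀] [CompleteSpace H₀]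
    [NormedAddCommGroup H₁] [InnerProductSpace ℂ H₁] [CompleteSpace H₁]
    [NormedAddCommGroup K₀] [InnerProductSpace ℂ K₀] [CompleteSpace K₀]
    [NormedAddCommGroup K₁] [InnerProductSpace ℂ K₁] [CompleteSpace K₁]
    (X : H₁ →L[ℂ] H₀) (U₀₁ : H₁ →L[ℂ] K₀) (U₁₀ : H₀ →L[ℂ] K₁)
    (U : WithLp 2 (H₀ × H₁) →L[ℂ] WithLp 2 (K₀ × K₁))
    (hU : U = blockOp (U₀₁ ∘L adjoint X) U₀₁ U₁₀ (-(U₁₀ ∘L X)))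
    (hU1 : adjoint U ∘L U = ContinuousLinearMap.id ℂ _)
    (hU2 : U ∘L adjoint U = ContinuousLinearMap.id ℂ _) :
    U₀₁ ∘L (1 + adjoint X ∘L X) ∘L adjoint U₀₁ = 1 ∧
    U₁₀ ∘L (1 + X ∘L adjoint X) ∘L adjoint U₁₀ = 1 ∧
    X ∘L (adjoint U₀₁ ∘L U₀₁) = (adjoint U₁₀ ∘L U₁₀) ∘L X ∧
    X ∘L (adjoint U₀₁ ∘L U₀₁) ∘L adjoint X + adjoint U₁₀ ∘L U₁₀ = 1 ∧
    adjoint X ∘L (adjoint U₁₀ ∘L U₁₀) ∘L X + adjoint U₀₁ ∘L U₀₁ = 1 ∧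
    (adjoint U₀₁ ∘L U₀₁) ∘L (1 + adjoint X ∘L X) = 1 ∧
    (1 + adjoint X ∘L X) ∘L (adjoint U₀₁ ∘L U₀₁) = 1 ∧
    (adjoint U₁₀ ∘L U₁₀) ∘L (1 + X ∘L adjoint X) = 1 ∧
    (1 + X ∘L adjoint X) ∘L (adjoint U₁₀ ∘L U₁₀) = 1 ∧
    (∃ V : K₀ →L[ℂ] H₁, U₀₁ ∘L V = 1 ∧ V ∘L U₀₁ = 1) ∧
    (∃ W : K₁ →L[ℂ] H₀, U₁₀ ∘L W = 1 ∧ W ∘L U₁₀ = 1) := by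
  subst hU
  simp only [blockOp_adjoint, blockOp_comp, blockOp_eq_id_iff, adjoint_comp, adjoint_adjoint,
    map_neg, comp_neg, neg_comp, neg_neg, comp_assoc, ← sub_eq_add_neg, sub_eq_zero] at hU1 hU2
  obtain ⟨e₀₀, e₀₁, e₁₀, e₁₁⟩ := hU1
  obtain ⟨f₀₀, -, -, f₁₁⟩ := hU2
  have hK₀ : U₀₁ ∘L (1 + adjoint X ∘L X) ∘L adjoint U₀₁ = 1 := by
    simpa only [add_comp, comp_add, one_def, id_comp, comp_id, comp_assoc, add_comm] using f₀₀
  have hK₁ : U₁₀ ∘L (1 + X ∘L adjoint X) ∘L adjoint U₁₀ = 1 := by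
    simpa only [add_comp, comp_add, one_def, id_comp, comp_id, comp_assoc] using f₁₁
  have hXP : X ∘L (adjoint U₀₁ ∘L U₀₁) = (adjoint U₁₀ ∘L U₁₀) ∘L X := by
    simpa only [comp_assoc] using e₀₁
  have hPX : (adjoint U₀₁ ∘L U₀₁) ∘L adjoint X = adjoint X ∘L (adjoint U₁₀ ∘L U₁₀) := by
    simpa only [comp_assoc] using e₁₀
  have hH₀ : X ∘L (adjoint U₀₁ ∘L U₀₁) ∘L adjoint X + adjoint U₁₀ ∘L U₁₀ = 1 := by
    simpa only [comp_assoc] using e₀₀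
  have hH₁ : adjoint X ∘L (adjoint U₁₀ ∘L U₁₀) ∘L X + adjoint U₀₁ ∘L U₀₁ = 1 := by
    simpa only [comp_assoc, add_comm] using e₁₁
  have hP := one_add_comp_comp_eq_one hXP hH₁
  have hQ := one_add_comp_comp_eq_one hPX.symm hH₀
  exact ⟨hK₀, hK₁, hXP, hH₀, hH₁, comp_one_add_comp_eq_one hPX hH₁, hP,
    comp_one_add_comp_eq_one hXP.symm hH₀, hQ, ⟨_, hK₀, (comp_assoc _ _ _).trans hP⟩,
    ⟨_, hK₁, (comp_assoc _ _ _).trans hQ⟩⟩
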